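/- arXiv:0908.0442 — 5 statements merged into one kernel-verified Lean document; each statement's English description precedes it below -/
import Mathlib

section
/- (Antipode lemma.) Let S^n be the unit sphere with geodesic distance d, p ≥ 1, Φ_i(z) = −d(x_i,z)^p/p + b_i and Φ_j(z) = −d(x_j,z)^p/p + b_j with x_i ≠ x_j. If Φ_i(x_i') > Φ_j(x_i') at the antipode x_i' = −x_i, then Φ_i(z) > Φ_j(z) for every z ∈ S^n. -/
/-
Write `t = d(x_i, z)`, `a = d(x_j, z)` and `c = d(x_j, -x_i)`. The triangle inequality through `z`,
together with `d(z, -x_i) = π - t`, gives `c ≤ a + (π - t)`. For the increasing convex function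
`r ↦ r ^ p` this forces `c ^ p + t ^ p ≤ a ^ p + π ^ p`, which is exactly the statement that the gap
`Φ_i - Φ_j` at `z` is at least its value at the antipode `-x_i`.
-/

open Real
open scoped RealInnerProductSpace
open InnerProductGeometry Set

lemma InnerProductGeometry.angle_eq_arccos_inner_of_norm_eq_one {V : Type*}
    [NormedAddCommGroup V] [InnerProductSpace ℝ V] {x y : V} (hx : ‖x‖ = 1) (hy : ‖y‖ = 1) :
    angle x y = arccos ⟪x, y⟫ := by
  simp [angle, hx, hy]

lemma ConvexOn.add_sub_le_add_sub {s : Set ℝ} {f : ℝ → ℝ} (hf : ConvexOn ℝ s f) {x y d : ℝ}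
    (hx : x ∈ s) (hyd : y + d ∈ s) (hxy : x ≤ y) (hd : 0 ≤ d) :
    f (x + d) - f x ≤ f (y + d) - f y := by
  rcases (add_nonneg (sub_nonneg.mpr hxy) hd).eq_or_lt with hL | hL
  · obtain rfl : x = y := by linarith
    obtain rfl : d = 0 := by linarith
    simp
  set L := y - x + d
  -- `x + d` and `y` are the two convex combinations of `x` and `y + d` with swapped weights.
  have hw : (y - x) / L + d / L = 1 := by rw [← add_div, div_self hL.ne']
  have hw₁ : 0 ≤ (y - x) / L := div_nonneg (sub_nonneg.mpr hxy) hL.le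
  have hw₂ : 0 ≤ d / L := div_nonneg hd hL.le
  have hxd : (y - x) / L * x + d / L * (y + d) = x + d := by field_simp; ring
  have hy : d / L * x + (y - x) / L * (y + d) = y := by field_simp; ring
  have h₁ := hf.2 hx hyd hw₁ hw₂ hw
  have h₂ := hf.2 hx hyd hw₂ hw₁ (by rwa [add_comm])
  simp only [smul_eq_mul, hxd, hy] at h₁ h₂
  linear_combination h₁ + h₂ + (f x + f (y + d)) * hw

lemma ConvexOn.add_le_add_of_le_add_sub {f : ℝ → ℝ} (hf : ConvexOn ℝ (Ici 0) f)
    (hf_mono : MonotoneOn f (Ici 0)) {a c t L : ℝ} (ha : 0 ≤ a) (hc : 0 ≤ c) (hcL : c ≤ L)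
    (ht : 0 ≤ t) (htL : t ≤ L) (hcat : c ≤ a + (L - t)) :
    f c + f t ≤ f a + f L := by
  -- Shift `c` down by `d` to a point `c - d ≤ min a t`, and compare increments over length `d`.
  set d := min c (L - t)
  have hd : 0 ≤ d := le_min hc (sub_nonneg.mpr htL)
  have hdc : d ≤ c := min_le_left _ _
  have hcd_le_t : c - d ≤ t := by
    rcases min_choice c (L - t) with h | h <;> simp only [d, h] <;> linarith
  have hcd_le_a : c - d ≤ a := by
    rcases min_choice c (L - t) with h | h <;> simp only [d, h] <;> linarith
  have hinc := hf.add_sub_le_add_sub (sub_nonneg.mpr hdc) (add_nonneg ht hd) hcd_le_t hd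
  rw [sub_add_cancel] at hinc
  have hfa := hf_mono (sub_nonneg.mpr hdc) ha hcd_le_a
  have hfL := hf_mono (add_nonneg ht hd) (ht.trans htL) (by linarith [min_le_right c (L - t)])
  linarith

theorem stmt7_general (n : ℕ) (xi xj : EuclideanSpace ℝ (Fin (n + 1)))
    (hxi : ‖xi‖ = 1) (hxj : ‖xj‖ = 1)
    (p : ℝ) (hp : 1 ≤ p) (bi bj : ℝ)
    (h : -(Real.arccos ⟪xj, -xi⟫) ^ p / p + bj < -(Real.arccos ⟪xi, -xi⟫) ^ p / p + bi) :
    ∀ z : EuclideanSpace ℝ (Fin (n + 1)), ‖z‖ = 1 →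
      -(Real.arccos ⟪xj, z⟫) ^ p / p + bj < -(Real.arccos ⟪xi, z⟫) ^ p / p + bi := by
  intro z hz
  have hnxi : ‖-xi‖ = 1 := by rw [norm_neg, hxi]
  simp only [← angle_eq_arccos_inner_of_norm_eq_one hxi hnxi,
    ← angle_eq_arccos_inner_of_norm_eq_one hxj hnxi, ← angle_eq_arccos_inner_of_norm_eq_one hxj hz,
    ← angle_eq_arccos_inner_of_norm_eq_one hxi hz,
    angle_self_neg_of_nonzero (ne_zero_of_norm_ne_zero (hxi.trans_ne one_ne_zero))] at h ⊢
  have htri : angle xj (-xi) ≤ angle xj z + (π - angle xi z) := by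
    simpa [angle_neg_right, angle_comm z xi] using angle_le_angle_add_angle xj z (-xi)
  have hkey := (convexOn_rpow hp).add_le_add_of_le_add_sub
    (monotoneOn_rpow_Ici_of_exponent_nonneg (by linarith)) (angle_nonneg xj z)
    (angle_nonneg xj (-xi)) (angle_le_pi _ _) (angle_nonneg xi z) (angle_le_pi _ _) htri
  have hp0 : 0 < p := by linarith
  have hkey_div := div_le_div_of_nonneg_right hkey hp0.le
  rw [add_div, add_div] at hkey_div
  simp only [neg_div] at h ⊢
  linarith

/-- Antipode lemma on the unit sphere: with `Φ_k(z) = −d(x_k,z)^p/p + b_k` and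
`d z y = arccos ⟪z,y⟫`, if `Φ_i > Φ_j` holds at the antipode `−x_i`, then `Φ_i > Φ_j`
holds everywhere on the sphere. -/
theorem stmt7 (n : ℕ) (xi xj : EuclideanSpace ℝ (Fin (n + 1)))
    (hxi : ‖xi‖ = 1) (hxj : ‖xj‖ = 1) (hij : xi ≠ xj)
    (p : ℝ) (hp : 1 ≤ p) (bi bj : ℝ)
    (h : -(Real.arccos ⟪xj, -xi⟫) ^ p / p + bj < -(Real.arccos ⟪xi, -xi⟫) ^ p / p + bi) :
    ∀ z : EuclideanSpace ℝ (Fin (n + 1)), ‖z‖ = 1 →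
      -(Real.arccos ⟪xj, z⟫) ^ p / p + bj < -(Real.arccos ⟪xi, z⟫) ^ p / p + bi :=
  stmt7_general n xi xj hxi hxj p hp bi bj h
end

section
/- (p = 1: cells are starlike.) Let (M,d) be a geodesic metric space (e.g. a compact connected complete Riemannian manifold), x₁,…,x_k ∈ M, b₁,…,b_k ∈ ℝ, Φ_i(z) = −d(x_i,z) + b_i, and C_i = {z : Φ_i(z) > Φ_j(z) ∀ j ≠ i}. Assume C_i ≠ ∅ (so b_i ≥ −d(x_i,x_j) + b_j for all j). Then for every w ∈ C_i and every q ∈ M with d(x_i,w) = d(x_i,q) + d(q,w) (q on a minimizing geodesic from x_i to w), we have q ∈ C_i. In particular C_i is starlike with respect to x_i and hence path-connected. -/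
/-!
The cell condition for `j` reads `d(xᵢ, z) - d(xⱼ, z) < bᵢ - bⱼ`, and the triangle inequality
shows that `z ↦ d(xᵢ, z) - d(xⱼ, z)` can only decrease when `z` moves from `w` to a point `q`
metrically between `xᵢ` and `w`. Hence cells are starlike with respect to their centres; a
nonempty cell contains its centre, and the minimizing geodesics from the centre give paths
inside the cell.
-/

open Set unitInterval

section Geodesic

variable {M : Type*} [MetricSpace M]

theorem dist_sub_dist_le_of_dist_eq_add {c w q : M} (y : M)
    (h : dist c w = dist c q + dist q w) :
    dist c q - dist y q ≤ dist c w - dist y w := by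
  linarith [dist_triangle y q w]

variable {a b : M} {f : ℝ → M}
  (hf : ∀ s ∈ Icc (0 : ℝ) (dist a b), ∀ t ∈ Icc (0 : ℝ) (dist a b), dist (f s) (f t) = |s - t|)
include hf

theorem dist_eq_add_of_isometryOn_Icc (h₀ : f 0 = a) (h₁ : f (dist a b) = b)
    {u : ℝ} (hu : u ∈ Icc 0 (dist a b)) :
    dist a b = dist a (f u) + dist (f u) b := by
  have hd : dist a b ∈ Icc 0 (dist a b) := ⟨dist_nonneg, le_rfl⟩
  have hstart := hf 0 (left_mem_Icc.2 hd.1) u hu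
  have hend := hf u hu _ hd
  rw [h₀] at hstart
  rw [h₁] at hend
  rw [hstart, hend, abs_of_nonpos (by linarith [hu.1]), abs_of_nonpos (by linarith [hu.2])]
  ring

theorem joinedIn_of_isometryOn_Icc {S : Set M} (h₀ : f 0 = a) (h₁ : f (dist a b) = b)
    (hS : ∀ q, dist a b = dist a q + dist q b → q ∈ S) : JoinedIn S a b := by
  have hscale : MapsTo (fun t : ℝ => t * dist a b) I (Icc 0 (dist a b)) := fun t ht =>
    ⟨mul_nonneg ht.1 dist_nonneg, mul_le_of_le_one_left dist_nonneg ht.2⟩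
  have hcont : ContinuousOn f (Icc 0 (dist a b)) :=
    (LipschitzOnWith.of_dist_le_mul fun s hs t ht => by
      rw [hf s hs t ht, NNReal.coe_one, one_mul, Real.dist_eq]).continuousOn
  refine JoinedIn.ofLine (hcont.comp (by fun_prop) hscale) (by simp [h₀]) (by simp [h₁]) ?_
  rintro _ ⟨t, ht, rfl⟩
  exact hS _ (dist_eq_add_of_isometryOn_Icc hf h₀ h₁ (hscale ht))

end Geodesic

section WeightedCell

variable {M ι : Type*} [MetricSpace M] (x : ι → M) (b : ι → ℝ)

/-- The cell `Cᵢ` of the additively weighted Voronoi diagram with `Φᵢ = -d(xᵢ, ·) + bᵢ`. -/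
def weightedCell (i : ι) : Set M :=
  {z | ∀ j, j ≠ i → -dist (x j) z + b j < -dist (x i) z + b i}

variable {x b}

theorem mem_weightedCell_of_dist_eq_add {i : ι} {w q : M} (hw : w ∈ weightedCell x b i)
    (hq : dist (x i) w = dist (x i) q + dist q w) : q ∈ weightedCell x b i := fun j hj => by
  linarith [hw j hj, dist_sub_dist_le_of_dist_eq_add (x j) hq]

theorem center_mem_weightedCell {i : ι} (h : (weightedCell x b i).Nonempty) :
    x i ∈ weightedCell x b i := by
  obtain ⟨w, hw⟩ := h
  exact mem_weightedCell_of_dist_eq_add hw (by simp)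

theorem isPathConnected_weightedCell
    (hgeo : ∀ a c : M, ∃ f : ℝ → M, f 0 = a ∧ f (dist a c) = c ∧
      ∀ s ∈ Icc (0 : ℝ) (dist a c), ∀ t ∈ Icc (0 : ℝ) (dist a c), dist (f s) (f t) = |s - t|)
    {i : ι} (h : (weightedCell x b i).Nonempty) : IsPathConnected (weightedCell x b i) := by
  refine ⟨x i, center_mem_weightedCell h, fun z hz => ?_⟩
  obtain ⟨f, h₀, h₁, hf⟩ := hgeo (x i) z
  exact joinedIn_of_isometryOn_Icc hf h₀ h₁ fun q hq => mem_weightedCell_of_dist_eq_add hz hq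

end WeightedCell

/-- `p = 1`: cells are starlike.  In a geodesic metric space `M` (any two points are
joined by a minimizing geodesic), with `Φ_i(z) = −d(x_i,z) + b_i` and cells
`C_i = {z | Φ_i(z) > Φ_j(z) ∀ j ≠ i}`:  any metric-between point `q` of `x_i` and a
cell point `w ∈ C_i` again lies in `C_i` (starlikeness with respect to `x_i`), and a
nonempty cell is path-connected. -/
theorem stmt11 (M : Type*) [MetricSpace M]
    (hgeo : ∀ a b : M, ∃ f : ℝ → M, f 0 = a ∧ f (dist a b) = b ∧
      ∀ s ∈ Set.Icc (0 : ℝ) (dist a b), ∀ t ∈ Set.Icc (0 : ℝ) (dist a b),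
        dist (f s) (f t) = |s - t|)
    (k : ℕ) (x : Fin k → M) (b : Fin k → ℝ) (i : Fin k) :
    (∀ w ∈ {z : M | ∀ j, j ≠ i → -dist (x j) z + b j < -dist (x i) z + b i},
      ∀ q : M, dist (x i) w = dist (x i) q + dist q w →
        q ∈ {z : M | ∀ j, j ≠ i → -dist (x j) z + b j < -dist (x i) z + b i}) ∧
    ({z : M | ∀ j, j ≠ i → -dist (x j) z + b j < -dist (x i) z + b i}.Nonempty →
      IsPathConnected
        {z : M | ∀ j, j ≠ i → -dist (x j) z + b j < -dist (x i) z + b i}) :=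
  ⟨fun _ hw _ hq => mem_weightedCell_of_dist_eq_add hw hq,
    isPathConnected_weightedCell hgeo⟩
end

section
/- (Asymptotics for the sign change, 1 < p < 2.) Fix x > 1 and 1 < p < 2. Let N(y) = u(y) + v(y) + w(y) be the numerator of η''(y) (after expanding over the common denominator) for the implicit level curve of m(x,y) = ((x+1)²+y²)^{p/2} − ((x−1)²+y²)^{p/2}. Then y^{8−3p} · N(y) → 8(p−1)(p−2)p² x < 0 as y → ∞. In particular N(y) < 0 for all sufficiently large y. -/
open Real Filter

noncomputable section

/-- The term `u` in the numerator of `η''` (notation: `A = (x−1)²+y²`, `B = (x+1)²+y²`). -/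
def uTerm (p x y : ℝ) : ℝ :=
  ((p - 2) * y ^ 2 * ((x - 1) ^ 2 + y ^ 2) ^ ((p - 4) / 2)
      - (p - 2) * y ^ 2 * ((x + 1) ^ 2 + y ^ 2) ^ ((p - 4) / 2)
      + ((x - 1) ^ 2 + y ^ 2) ^ ((p - 2) / 2)
      - ((x + 1) ^ 2 + y ^ 2) ^ ((p - 2) / 2))
    * (p * (x - 1) * ((x - 1) ^ 2 + y ^ 2) ^ ((p - 2) / 2)
      - p * (x + 1) * ((x + 1) ^ 2 + y ^ 2) ^ ((p - 2) / 2)) ^ 2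

/-- The term `v` in the numerator of `η''`. -/
def vTerm (p x y : ℝ) : ℝ :=
  p ^ 2 * y ^ 2
    * (((x - 1) ^ 2 + y ^ 2) ^ ((p - 2) / 2)
      - ((x + 1) ^ 2 + y ^ 2) ^ ((p - 2) / 2)) ^ 2
    * ((p - 2) * (x - 1) ^ 2 * ((x - 1) ^ 2 + y ^ 2) ^ ((p - 4) / 2)
      - (p - 2) * (x + 1) ^ 2 * ((x + 1) ^ 2 + y ^ 2) ^ ((p - 4) / 2)
      + ((x - 1) ^ 2 + y ^ 2) ^ ((p - 2) / 2)
      - ((x + 1) ^ 2 + y ^ 2) ^ ((p - 2) / 2))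

/-- The term `w` in the numerator of `η''`. -/
def wTerm (p x y : ℝ) : ℝ :=
  2 * (p - 2) * p * y ^ 2
    * (-((x - 1) ^ 2 + y ^ 2) ^ ((p - 2) / 2)
      + ((x + 1) ^ 2 + y ^ 2) ^ ((p - 2) / 2))
    * ((1 - x) * ((x - 1) ^ 2 + y ^ 2) ^ ((p - 4) / 2)
      + (1 + x) * ((x + 1) ^ 2 + y ^ 2) ^ ((p - 4) / 2))
    * (-(p * (x - 1)) * ((x - 1) ^ 2 + y ^ 2) ^ ((p - 2) / 2)
      + p * (x + 1) * ((x + 1) ^ 2 + y ^ 2) ^ ((p - 2) / 2))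

/-! With `t = y⁻²`, each power `((x ∓ 1)² + y²)^q` factors as `y^{2q} (1 + (x ∓ 1)² t)^q`, so the
numerator is `y^{3p-8}` times a function `Φ(t)` of the powers `(1 + c t)^q` and of the difference
quotients `((1 + (x-1)² t)^q - (1 + (x+1)² t)^q) / t`. As `t → 0` the former tend to `1` and the
latter to `q ((x-1)² - (x+1)²) = -4qx`, the derivative of `s ↦ (1 + c s)^q` at `0` being `q c`;
substituting these limits gives `Φ(t) → 8(p-1)(p-2)p²x`, which is negative for `1 < p < 2`. -/

open Topology

lemma tendsto_one_add_mul_rpow_sub_one_div (q c : ℝ) :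
    Tendsto (fun t : ℝ => ((1 + c * t) ^ q - 1) / t) (𝓝[≠] 0) (𝓝 (q * c)) := by
  have hderiv : HasDerivAt (fun t : ℝ => (1 + c * t) ^ q) (q * c) 0 := by
    have hlin : HasDerivAt (fun t : ℝ => 1 + c * t) c 0 := by
      simpa using ((hasDerivAt_id (0 : ℝ)).const_mul c).const_add 1
    simpa [mul_comm] using hlin.rpow_const (p := q) (Or.inl (by norm_num))
  refine hderiv.tendsto_slope_zero.congr fun t => ?_
  simp [div_eq_inv_mul]

lemma tendsto_one_add_mul_rpow (q c : ℝ) :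
    Tendsto (fun t : ℝ => (1 + c * t) ^ q) (𝓝 0) (𝓝 1) := by
  have hcont : ContinuousAt (fun t : ℝ => (1 + c * t) ^ q) 0 :=
    ContinuousAt.rpow_const (by fun_prop) (Or.inl (by norm_num))
  simpa using hcont.tendsto

lemma add_sq_rpow_eq (q c : ℝ) {y : ℝ} (hy : 0 < y) (hc : 0 ≤ c) :
    (c + y ^ 2) ^ q = y ^ (2 * q) * (1 + c * (y ^ 2)⁻¹) ^ q := by
  have hfactor : c + y ^ 2 = y ^ 2 * (1 + c * (y ^ 2)⁻¹) := by field_simp; ring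
  rw [hfactor, Real.mul_rpow (by positivity) (by positivity), Real.rpow_mul hy.le]
  norm_cast

def rescaledNumerator (p x t : ℝ) : ℝ :=
  let P q := (1 + (x - 1) ^ 2 * t) ^ q
  let Q q := (1 + (x + 1) ^ 2 * t) ^ q
  let D q := (P q - Q q) / t
  let E := p * (x - 1) * P ((p - 2) / 2) - p * (x + 1) * Q ((p - 2) / 2)
  ((p - 2) * D ((p - 4) / 2) + D ((p - 2) / 2)) * E ^ 2
    + p ^ 2 * t * D ((p - 2) / 2) ^ 2
      * ((p - 2) * ((x - 1) ^ 2 * P ((p - 4) / 2) - (x + 1) ^ 2 * Q ((p - 4) / 2))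
        + D ((p - 2) / 2))
    + 2 * (p - 2) * p * D ((p - 2) / 2)
      * ((1 - x) * P ((p - 4) / 2) + (1 + x) * Q ((p - 4) / 2)) * E

lemma tendsto_rescaledNumerator (p x : ℝ) :
    Tendsto (rescaledNumerator p x) (𝓝[≠] 0) (𝓝 (8 * (p - 1) * (p - 2) * p ^ 2 * x)) := by
  have hP (q : ℝ) : Tendsto (fun t : ℝ => (1 + (x - 1) ^ 2 * t) ^ q) (𝓝[≠] 0) (𝓝 1) :=
    (tendsto_one_add_mul_rpow q _).mono_left nhdsWithin_le_nhds
  have hQ (q : ℝ) : Tendsto (fun t : ℝ => (1 + (x + 1) ^ 2 * t) ^ q) (𝓝[≠] 0) (𝓝 1) :=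
    (tendsto_one_add_mul_rpow q _).mono_left nhdsWithin_le_nhds
  have hD (q : ℝ) : Tendsto
      (fun t : ℝ => ((1 + (x - 1) ^ 2 * t) ^ q - (1 + (x + 1) ^ 2 * t) ^ q) / t)
      (𝓝[≠] 0) (𝓝 (q * (x - 1) ^ 2 - q * (x + 1) ^ 2)) :=
    ((tendsto_one_add_mul_rpow_sub_one_div q _).sub
      (tendsto_one_add_mul_rpow_sub_one_div q _)).congr fun t => by ring
  have ht : Tendsto (fun t : ℝ => t) (𝓝[≠] 0) (𝓝 0) := tendsto_nhdsWithin_of_tendsto_nhds tendsto_id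
  have hE := ((hP ((p - 2) / 2)).const_mul (p * (x - 1))).sub
    ((hQ ((p - 2) / 2)).const_mul (p * (x + 1)))
  have hlim := ((((hD ((p - 4) / 2)).const_mul (p - 2)).add (hD ((p - 2) / 2))).mul (hE.pow 2)
    |>.add ((((ht.const_mul (p ^ 2)).mul ((hD ((p - 2) / 2)).pow 2)).mul
      (((((hP ((p - 4) / 2)).const_mul ((x - 1) ^ 2)).sub
        ((hQ ((p - 4) / 2)).const_mul ((x + 1) ^ 2))).const_mul (p - 2)).add (hD ((p - 2) / 2)))))
    |>.add (((hD ((p - 2) / 2)).const_mul (2 * (p - 2) * p)).mul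
      (((hP ((p - 4) / 2)).const_mul (1 - x)).add ((hQ ((p - 4) / 2)).const_mul (1 + x)))
      |>.mul hE))
  convert hlim using 2
  · rfl
  · ring

lemma numerator_eq_rpow_mul_rescaledNumerator (p x : ℝ) {y : ℝ} (hy : 0 < y) :
    uTerm p x y + vTerm p x y + wTerm p x y
      = y ^ (3 * p - 8) * rescaledNumerator p x (y ^ 2)⁻¹ := by
  have hpow (a : ℝ) (n : ℕ) : y ^ (a + n) = y ^ a * y ^ n := by
    rw [Real.rpow_add hy, Real.rpow_natCast]
  have h2 : y ^ (2 * ((p - 2) / 2)) = y ^ (2 * ((p - 4) / 2)) * y ^ 2 := by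
    rw [← hpow]; congr 1; push_cast; ring
  have h3 : y ^ (3 * p - 8) = (y ^ (2 * ((p - 4) / 2))) ^ 3 * y ^ 4 := by
    rw [← Real.rpow_mul_natCast hy.le, ← hpow]; congr 1; push_cast; ring
  unfold uTerm vTerm wTerm rescaledNumerator
  simp only [add_sq_rpow_eq _ _ hy (sq_nonneg (x - 1)), add_sq_rpow_eq _ _ hy (sq_nonneg (x + 1)),
    h2, h3]
  field_simp
  ring

/-- Asymptotics of the numerator `N = u + v + w` of `η''` for `1 < p < 2`, `x > 1`:
`y^{8−3p}·N(y) → 8(p−1)(p−2)p²x < 0` as `y → ∞`; in particular `N(y) < 0` for all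
sufficiently large `y`. -/
theorem stmt14 (p x : ℝ) (hp1 : 1 < p) (hp2 : p < 2) (hx : 1 < x) :
    Tendsto (fun y : ℝ => y ^ (8 - 3 * p) * (uTerm p x y + vTerm p x y + wTerm p x y))
      atTop (nhds (8 * (p - 1) * (p - 2) * p ^ 2 * x)) ∧
    8 * (p - 1) * (p - 2) * p ^ 2 * x < 0 ∧
    ∀ᶠ y in atTop, uTerm p x y + vTerm p x y + wTerm p x y < 0 := by
  have hlimit : Tendsto (fun y : ℝ => y ^ (8 - 3 * p) * (uTerm p x y + vTerm p x y + wTerm p x y))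
      atTop (𝓝 (8 * (p - 1) * (p - 2) * p ^ 2 * x)) := by
    have hinv : Tendsto (fun y : ℝ => (y ^ 2)⁻¹) atTop (𝓝[≠] 0) :=
      (tendsto_inv_atTop_nhdsGT_zero.comp (tendsto_pow_atTop two_ne_zero)).mono_right
        (nhdsGT_le_nhdsNE 0)
    refine ((tendsto_rescaledNumerator p x).comp hinv).congr' ?_
    filter_upwards [eventually_gt_atTop 0] with y hy
    rw [Function.comp_apply, numerator_eq_rpow_mul_rescaledNumerator p x hy, ← mul_assoc,
      ← Real.rpow_add hy]
    norm_num
  have hneg : 8 * (p - 1) * (p - 2) * p ^ 2 * x < 0 := by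
    have hpos : 0 < (p - 1) * p ^ 2 * x := by
      have : 0 < p - 1 := by linarith
      positivity
    nlinarith
  refine ⟨hlimit, hneg, ?_⟩
  filter_upwards [hlimit.eventually (gt_mem_nhds hneg), eventually_gt_atTop 0] with y hNy hy
  exact neg_of_mul_neg_right hNy (Real.rpow_pos_of_pos hy _).le

end
end

section
/- (Disconnected cells in convex Euclidean domains.) For every p ∈ (1,∞) with p ≠ 2 and n ≥ 2 there exist a compact convex set Ω ⊂ ℝⁿ, two points x₁, x₂ ∈ Ω, and constants b₁, b₂ ∈ ℝ such that the set H = {z ∈ Ω : −|z−x₁|^p + b₁·p > −|z−x₂|^p + b₂·p} (equivalently {z ∈ Ω : |z−x₂|^p − |z−x₁|^p > α} for suitable α) is not connected. -/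
/-!
Take `x₁ = (1, 0)`, `x₂ = (-1, 0)` in the plane, `b₁ = 0` and `b₂ = α / p`: the cell becomes
`{z ∈ Ω | α < ‖z - x₂‖ ^ p - ‖z - x₁‖ ^ p}`, and a linear isometry carries it into `ℝⁿ`. It is
disconnected as soon as a horizontal line meets `Ω` only where this gap is `≤ α` while the cell
has points on both sides of the line. Write `p = 2q`.

For `q > 1`, convexity of `t ↦ t ^ q` makes the gap at `(1, ±R)` exceed `4 ^ q` for large `R`,
while on `[-1, 1] × {0}` it is at most `4 ^ q`.

For `q < 1`, concavity bounds the gap on the line `y = S` by `8q (S²)^(q-1)` wherever `x ≤ 2`,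
and this tends to `0`. At the far vertex `(u, S u)` of the triangle `(-1, 0), (1, 0), (u, S u)`,
whose slice at height `S` lies in `x ≤ 2`, the gap is at least `4q u (2u²)^(q-1) (S²)^(q-1)`,
larger by a factor growing like `u ^ (2q - 1)`.
-/

open Real Set Filter Topology

theorem rpow_le_rpow_add_mul_sub {q a b : ℝ} (hq₀ : 0 ≤ q) (hq₁ : q ≤ 1) (ha : 0 ≤ a)
    (hb : 0 < b) : a ^ q ≤ b ^ q + q * b ^ (q - 1) * (a - b) := by
  have hab : 0 ≤ a / b := div_nonneg ha hb.le
  have hber := rpow_one_add_le_one_add_mul_self (by linarith : -1 ≤ a / b - 1) hq₀ hq₁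
  rw [add_sub_cancel] at hber
  calc a ^ q = b ^ q * (a / b) ^ q := by rw [← mul_rpow hb.le hab, mul_div_cancel₀ _ hb.ne']
    _ ≤ b ^ q * (1 + q * (a / b - 1)) := mul_le_mul_of_nonneg_left hber (rpow_nonneg hb.le q)
    _ = b ^ q + q * b ^ (q - 1) * (a - b) := by rw [rpow_sub_one hb.ne']; field_simp

theorem rpow_add_mul_sub_le_rpow {q a b : ℝ} (hq : 1 ≤ q) (ha : 0 ≤ a) (hb : 0 < b) :
    b ^ q + q * b ^ (q - 1) * (a - b) ≤ a ^ q := by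
  have hab : 0 ≤ a / b := div_nonneg ha hb.le
  have hber := one_add_mul_self_le_rpow_one_add (by linarith : -1 ≤ a / b - 1) hq
  rw [add_sub_cancel] at hber
  calc b ^ q + q * b ^ (q - 1) * (a - b) = b ^ q * (1 + q * (a / b - 1)) := by
        rw [rpow_sub_one hb.ne']; field_simp
    _ ≤ b ^ q * (a / b) ^ q := mul_le_mul_of_nonneg_left hber (rpow_nonneg hb.le q)
    _ = a ^ q := by rw [← mul_rpow hb.le hab, mul_div_cancel₀ _ hb.ne']

theorem tendsto_sq_rpow_atTop_nhds_zero {e : ℝ} (he : e < 0) :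
    Tendsto (fun S : ℝ => (S ^ 2) ^ e) atTop (𝓝 0) := by
  simpa [Function.comp_def] using
    (tendsto_rpow_neg_atTop (neg_pos.mpr he)).comp (tendsto_pow_atTop two_ne_zero)

theorem tendsto_mul_two_mul_sq_rpow_atTop {e : ℝ} (he : -(1 / 2) < e) :
    Tendsto (fun u : ℝ => u * (2 * u ^ 2) ^ e) atTop atTop := by
  have hpow : ∀ u : ℝ, 0 < u → 2 ^ e * u ^ (2 * e + 1) = u * (2 * u ^ 2) ^ e := by
    intro u hu
    rw [mul_rpow (by norm_num) (by positivity), ← rpow_natCast, ← rpow_mul hu.le,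
      rpow_add_one hu.ne', Nat.cast_ofNat]
    ring
  exact ((tendsto_rpow_atTop (by linarith)).const_mul_atTop (by positivity)).congr'
    ((eventually_gt_atTop 0).mono hpow)

theorem LinearMap.apply_mem_of_mem_convexHull {E : Type*} [AddCommGroup E] [Module ℝ E]
    (ℓ : E →ₗ[ℝ] ℝ) {V : Set E} {t : Set ℝ} (ht : Convex ℝ t) (hV : ∀ v ∈ V, ℓ v ∈ t) {z : E}
    (hz : z ∈ convexHull ℝ V) : ℓ z ∈ t :=
  convexHull_min hV (ht.linear_preimage ℓ) hz

noncomputable def EuclideanSpace.linearIsometryOfEmbedding {ι κ : Type*} [Fintype ι]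
    [Fintype κ] [DecidableEq ι] [DecidableEq κ] (e : ι ↪ κ) :
    EuclideanSpace ℝ ι →ₗᵢ[ℝ] EuclideanSpace ℝ κ :=
  let b := EuclideanSpace.basisFun ι ℝ
  let f := b.toBasis.constr ℝ (EuclideanSpace.basisFun κ ℝ ∘ e)
  f.isometryOfOrthonormal (v := b.toBasis) b.orthonormal <| by
    have hf : f ∘ b.toBasis = EuclideanSpace.basisFun κ ℝ ∘ e :=
      funext fun i => b.toBasis.constr_basis ℝ _ i
    rw [hf]
    exact (EuclideanSpace.basisFun κ ℝ).orthonormal.comp e e.injective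

def HasDisconnectedPowerCell (E : Type*) [NormedAddCommGroup E] [NormedSpace ℝ E] (p : ℝ) :
    Prop :=
  ∃ (Ω : Set E) (x₁ x₂ : E) (b₁ b₂ : ℝ), IsCompact Ω ∧ Convex ℝ Ω ∧ x₁ ∈ Ω ∧ x₂ ∈ Ω ∧
    ¬ IsPreconnected {z ∈ Ω | -‖z - x₂‖ ^ p + b₂ * p < -‖z - x₁‖ ^ p + b₁ * p}

theorem HasDisconnectedPowerCell.map {E F : Type*} [NormedAddCommGroup E] [NormedSpace ℝ E]
    [NormedAddCommGroup F] [NormedSpace ℝ F] {p : ℝ} (h : HasDisconnectedPowerCell E p)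
    (L : E →ₗᵢ[ℝ] F) : HasDisconnectedPowerCell F p := by
  obtain ⟨Ω, x₁, x₂, b₁, b₂, hΩc, hΩv, h₁, h₂, hH⟩ := h
  refine ⟨L '' Ω, L x₁, L x₂, b₁, b₂, hΩc.image L.continuous, hΩv.linear_image L.toLinearMap,
    mem_image_of_mem L h₁, mem_image_of_mem L h₂, ?_⟩
  have hcell : {z ∈ L '' Ω | -‖z - L x₂‖ ^ p + b₂ * p < -‖z - L x₁‖ ^ p + b₁ * p} =
      L '' {z ∈ Ω | -‖z - x₂‖ ^ p + b₂ * p < -‖z - x₁‖ ^ p + b₁ * p} := by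
    ext z
    simp only [mem_ofPred_eq, mem_image]
    constructor
    · rintro ⟨⟨w, hw, rfl⟩, hz⟩
      exact ⟨w, ⟨hw, by simpa only [← map_sub, L.norm_map] using hz⟩, rfl⟩
    · rintro ⟨w, ⟨hw, hz⟩, rfl⟩
      exact ⟨⟨w, hw, rfl⟩, by simpa only [← map_sub, L.norm_map] using hz⟩
  rwa [hcell, L.isometry.isEmbedding.isInducing.isPreconnected_image]

noncomputable def powerGap (q x y : ℝ) : ℝ :=
  ((x + 1) ^ 2 + y ^ 2) ^ q - ((x - 1) ^ 2 + y ^ 2) ^ q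

local notation "ℝ²" => EuclideanSpace ℝ (Fin 2)

theorem EuclideanSpace.norm_rpow_two_mul_fin_two (z : ℝ²) (q : ℝ) :
    ‖z‖ ^ (2 * q) = (z 0 ^ 2 + z 1 ^ 2) ^ q := by
  rw [EuclideanSpace.norm_eq, Fin.sum_univ_two, Real.norm_eq_abs, Real.norm_eq_abs, sq_abs,
    sq_abs, sqrt_eq_rpow, ← rpow_mul (by positivity)]
  ring_nf

theorem norm_sub_rpow_sub_norm_sub_rpow_eq_powerGap (z : ℝ²) (q : ℝ) :
    ‖z - !₂[-1, 0]‖ ^ (2 * q) - ‖z - !₂[1, 0]‖ ^ (2 * q) = powerGap q (z 0) (z 1) := by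
  simp [EuclideanSpace.norm_rpow_two_mul_fin_two, powerGap]

theorem powerGap_one_zero {q : ℝ} (hq : 0 < q) : powerGap q 1 0 = 4 ^ q := by
  norm_num [powerGap, zero_rpow hq.ne']

theorem powerGap_neg_right {q x y : ℝ} : powerGap q x (-y) = powerGap q x y := by
  simp [powerGap]

theorem powerGap_zero_le {q x : ℝ} (hq : 0 ≤ q) (hx : |x| ≤ 1) : powerGap q x 0 ≤ 4 ^ q := by
  have hx₁ : (x + 1) ^ 2 + 0 ^ 2 ≤ 4 := by nlinarith [abs_le.mp hx]
  have := rpow_le_rpow (by positivity) hx₁ hq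
  have := rpow_nonneg (by positivity : (0 : ℝ) ≤ (x - 1) ^ 2 + 0 ^ 2) q
  unfold powerGap
  linarith

theorem le_powerGap_one {q y : ℝ} (hq : 1 ≤ q) (hy : y ≠ 0) :
    4 * q * (y ^ 2) ^ (q - 1) ≤ powerGap q 1 y := by
  have htangent :=
    rpow_add_mul_sub_le_rpow hq (by positivity : (0 : ℝ) ≤ 4 + y ^ 2) (by positivity : 0 < y ^ 2)
  have h₁ : (1 + 1 : ℝ) ^ 2 + y ^ 2 = 4 + y ^ 2 := by norm_num
  have h₂ : (1 - 1 : ℝ) ^ 2 + y ^ 2 = y ^ 2 := by norm_num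
  rw [powerGap, h₁, h₂]
  linarith

theorem powerGap_le_of_le_one {q x y : ℝ} (hq₀ : 0 ≤ q) (hq₁ : q ≤ 1) (hx : x ≤ 2)
    (hy : y ≠ 0) : powerGap q x y ≤ 8 * q * (y ^ 2) ^ (q - 1) := by
  have hy₂ : 0 < y ^ 2 := by positivity
  have hB : y ^ 2 ≤ (x - 1) ^ 2 + y ^ 2 := by nlinarith
  have htangent := rpow_le_rpow_add_mul_sub hq₀ hq₁ (by positivity : 0 ≤ (x + 1) ^ 2 + y ^ 2)
    (hy₂.trans_le hB)
  have hmono : ((x - 1) ^ 2 + y ^ 2) ^ (q - 1) ≤ (y ^ 2) ^ (q - 1) :=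
    rpow_le_rpow_of_nonpos hy₂ hB (by linarith)
  have hslope : ((x - 1) ^ 2 + y ^ 2) ^ (q - 1) * x ≤ (y ^ 2) ^ (q - 1) * 2 := by
    rcases le_or_gt x 0 with hx₀ | hx₀
    · nlinarith [rpow_nonneg hy₂.le (q - 1), rpow_nonneg (hy₂.trans_le hB).le (q - 1)]
    · nlinarith [rpow_nonneg hy₂.le (q - 1)]
  unfold powerGap
  nlinarith

theorem le_powerGap_of_le_one {q x y : ℝ} (hq₀ : 0 ≤ q) (hq₁ : q ≤ 1) (hx : 0 ≤ x)
    (hxy : x + 1 ≤ y) : 4 * q * x * (2 * y ^ 2) ^ (q - 1) ≤ powerGap q x y := by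
  have hA : 0 < (x + 1) ^ 2 + y ^ 2 := by nlinarith
  have hA₂ : (x + 1) ^ 2 + y ^ 2 ≤ 2 * y ^ 2 := by nlinarith
  have htangent :=
    rpow_le_rpow_add_mul_sub hq₀ hq₁ (by positivity : 0 ≤ (x - 1) ^ 2 + y ^ 2) hA
  have hmono : (2 * y ^ 2) ^ (q - 1) ≤ ((x + 1) ^ 2 + y ^ 2) ^ (q - 1) :=
    rpow_le_rpow_of_nonpos hA hA₂ (by linarith)
  have : 4 * q * x * (2 * y ^ 2) ^ (q - 1) ≤ 4 * q * x * ((x + 1) ^ 2 + y ^ 2) ^ (q - 1) :=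
    mul_le_mul_of_nonneg_left hmono (by positivity)
  unfold powerGap
  nlinarith

theorem hasDisconnectedPowerCell_of_separatingLine {q α c : ℝ} (hq : 0 < q) {Ω : Set ℝ²}
    (hΩc : IsCompact Ω) (hΩv : Convex ℝ Ω) (h₁ : !₂[1, 0] ∈ Ω) (h₂ : !₂[-1, 0] ∈ Ω)
    {a b : ℝ²} (ha : a ∈ Ω) (hb : b ∈ Ω) (hαa : α < powerGap q (a 0) (a 1))
    (hαb : α < powerGap q (b 0) (b 1)) (hac : a 1 < c) (hcb : c < b 1)
    (hline : ∀ z ∈ Ω, z 1 = c → powerGap q (z 0) (z 1) ≤ α) :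
    HasDisconnectedPowerCell ℝ² (2 * q) := by
  refine ⟨Ω, !₂[1, 0], !₂[-1, 0], 0, α / (2 * q), hΩc, hΩv, h₁, h₂, ?_⟩
  have hcell : {z ∈ Ω | -‖z - !₂[-1, 0]‖ ^ (2 * q) + α / (2 * q) * (2 * q) <
      -‖z - !₂[1, 0]‖ ^ (2 * q) + 0 * (2 * q)} = {z ∈ Ω | α < powerGap q (z 0) (z 1)} := by
    ext z
    simp only [mem_ofPred_eq, ← norm_sub_rpow_sub_norm_sub_rpow_eq_powerGap,
      div_mul_cancel₀ _ (by positivity : 2 * q ≠ 0)]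
    constructor <;> rintro ⟨hz, h⟩ <;> exact ⟨hz, by linarith⟩
  rw [hcell]
  intro hpre
  obtain ⟨z, ⟨hzΩ, hzα⟩, hzc⟩ := hpre.intermediate_value ⟨ha, hαa⟩ ⟨hb, hαb⟩
    (EuclideanSpace.proj (1 : Fin 2) : ℝ² →L[ℝ] ℝ).continuous.continuousOn ⟨hac.le, hcb.le⟩
  exact hzα.not_ge (hline z hzΩ hzc)

theorem hasDisconnectedPowerCell_plane_of_one_lt {q : ℝ} (hq : 1 < q) :
    HasDisconnectedPowerCell ℝ² (2 * q) := by
  obtain ⟨R, hR, hR₀⟩ : ∃ R : ℝ, 4 ^ q < 4 * q * (R ^ 2) ^ (q - 1) ∧ 0 < R :=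
    ((((tendsto_rpow_atTop (by linarith)).comp (tendsto_pow_atTop two_ne_zero)).const_mul_atTop
      (by positivity)).eventually_gt_atTop (4 ^ q)).and (eventually_gt_atTop 0) |>.exists
  have hfar : 4 ^ q < powerGap q 1 R := hR.trans_le (le_powerGap_one hq.le hR₀.ne')
  set V : Set ℝ² := {!₂[1, 0], !₂[-1, 0], !₂[1, -R], !₂[1, R]}
  have hV : ∀ z ∈ convexHull ℝ V, z 0 ∈ Icc (-1) 1 := fun z =>
    (EuclideanSpace.proj (0 : Fin 2) : ℝ² →L[ℝ] ℝ).toLinearMap.apply_mem_of_mem_convexHull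
      (convex_Icc _ _) (by simp [V])
  have hmem : ∀ v ∈ V, v ∈ convexHull ℝ V := subset_convexHull ℝ V
  refine hasDisconnectedPowerCell_of_separatingLine (α := 4 ^ q) (c := 0) (by linarith)
    ((Set.toFinite V).isCompact_convexHull ℝ) (convex_convexHull ℝ V) (hmem _ (by simp [V]))
    (hmem _ (by simp [V])) (hmem !₂[1, -R] (by simp [V])) (hmem !₂[1, R] (by simp [V]))
    (by simpa [powerGap_neg_right] using hfar) (by simpa using hfar) (by simpa using hR₀)
    (by simpa using hR₀) fun z hz hz₀ => ?_
  rw [hz₀]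
  exact powerGap_zero_le (by linarith) (abs_le.mpr (hV z hz))

theorem hasDisconnectedPowerCell_plane_of_lt_one {q : ℝ} (hq₀ : 1 / 2 < q) (hq₁ : q < 1) :
    HasDisconnectedPowerCell ℝ² (2 * q) := by
  obtain ⟨S, hS, hS₂⟩ : ∃ S : ℝ, 8 * q * (S ^ 2) ^ (q - 1) < 4 ^ q ∧ 2 ≤ S := by
    have hlim := (tendsto_sq_rpow_atTop_nhds_zero (by linarith : q - 1 < 0)).const_mul (8 * q)
    rw [mul_zero] at hlim
    exact ((hlim.eventually_lt_const (by positivity)).and (eventually_ge_atTop 2)).exists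
  obtain ⟨u, hu, hu₁⟩ : ∃ u : ℝ, 2 < u * (2 * u ^ 2) ^ (q - 1) ∧ 1 < u :=
    (((tendsto_mul_two_mul_sq_rpow_atTop (by linarith)).eventually_gt_atTop 2).and
      (eventually_gt_atTop 1)).exists
  have hfar : 8 * q * (S ^ 2) ^ (q - 1) < powerGap q u (S * u) := by
    calc 8 * q * (S ^ 2) ^ (q - 1) < 4 * q * u * (2 * u ^ 2) ^ (q - 1) * (S ^ 2) ^ (q - 1) := by
          have : 0 < q * (S ^ 2) ^ (q - 1) := by positivity
          nlinarith
      _ = 4 * q * u * (2 * (S * u) ^ 2) ^ (q - 1) := by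
          rw [mul_assoc (4 * q * u), ← mul_rpow (by positivity) (by positivity)]
          ring_nf
      _ ≤ powerGap q u (S * u) :=
          le_powerGap_of_le_one (by linarith) hq₁.le (by linarith) (by nlinarith)
  have hS₀ : 0 < S := by linarith
  have hSu : S < S * u := by nlinarith
  set V : Set ℝ² := {!₂[1, 0], !₂[-1, 0], !₂[u, S * u]}
  have hV : ∀ z ∈ convexHull ℝ V, S * u * z 0 - (u - 1) * z 1 ≤ S * u := by
    intro z hz
    exact ((S * u) • EuclideanSpace.proj 0 - (u - 1) • EuclideanSpace.proj 1 : ℝ² →L[ℝ] ℝ)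
      |>.toLinearMap.apply_mem_of_mem_convexHull (convex_Iic (S * u))
        (by simpa [V, (hS₀.trans hSu).le] using
          (by linarith : S * u * u ≤ S * u + (u - 1) * (S * u))) hz
  have hmem : ∀ v ∈ V, v ∈ convexHull ℝ V := subset_convexHull ℝ V
  refine hasDisconnectedPowerCell_of_separatingLine (α := 8 * q * (S ^ 2) ^ (q - 1)) (c := S)
    (by linarith) ((Set.toFinite V).isCompact_convexHull ℝ) (convex_convexHull ℝ V)
    (hmem _ (by simp [V])) (hmem _ (by simp [V])) (hmem !₂[1, 0] (by simp [V]))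
    (hmem !₂[u, S * u] (by simp [V]))
    (by simpa [powerGap_one_zero (by linarith : 0 < q)] using hS) (by simpa using hfar)
    (by simpa using hS₀) (by simpa using hSu) fun z hz hzS => ?_
  have hedge := hV z hz
  rw [hzS] at hedge ⊢
  refine powerGap_le_of_le_one (by linarith) hq₁.le
    (le_of_mul_le_mul_left ?_ (hS₀.trans hSu)) (by positivity)
  linarith

/-- Disconnected cells in convex Euclidean domains: for every `p ∈ (1,∞)`, `p ≠ 2` and
`n ≥ 2` there are a compact convex `Ω ⊂ ℝⁿ`, points `x₁, x₂ ∈ Ω` and constants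
`b₁, b₂` such that the cell `{z ∈ Ω | −‖z−x₁‖^p + b₁·p > −‖z−x₂‖^p + b₂·p}` is not
connected. -/
theorem stmt16 (n : ℕ) (hn : 2 ≤ n) (p : ℝ) (hp : 1 < p) (hp2 : p ≠ 2) :
    ∃ (Ω : Set (EuclideanSpace ℝ (Fin n))) (x₁ x₂ : EuclideanSpace ℝ (Fin n))
      (b₁ b₂ : ℝ), IsCompact Ω ∧ Convex ℝ Ω ∧ x₁ ∈ Ω ∧ x₂ ∈ Ω ∧
      ¬ IsPreconnected {z ∈ Ω | -‖z - x₂‖ ^ p + b₂ * p < -‖z - x₁‖ ^ p + b₁ * p} := by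
  have hplane : HasDisconnectedPowerCell ℝ² (2 * (p / 2)) := by
    rcases hp2.lt_or_gt with hlt | hgt
    · exact hasDisconnectedPowerCell_plane_of_lt_one (by linarith) (by linarith)
    · exact hasDisconnectedPowerCell_plane_of_one_lt (by linarith)
  rw [mul_div_cancel₀ p two_ne_zero] at hplane
  exact hplane.map (EuclideanSpace.linearIsometryOfEmbedding (Fin.castLEEmb hn))
end

section
/- (Monotone rearrangement of shifted antipodal potentials on a great circle.) Parametrize a great circle C of S^n through x_i and x_j by arclength θ ∈ ℝ/2πℤ with x_i at θ = 0, and let f(θ) = −d_C(0,θ)^p/p where d_C(0,θ) = min(|θ|, 2π − |θ|) (so f is the restriction of Φ_i minus b_i to C). Then Φ_j restricted to C equals θ ↦ f(θ − s) + b_j, where s = ±d(x_i,x_j) is the circle coordinate of x_j. Moreover for any s and any constant β, the set {θ : f(θ) − f(θ − s) > β} is either empty, all of the circle, or a single open arc. -/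
/-!
Lift the circle to `[π, 3π]` and take the representative `s₀ ∈ [0, 2π]` of `s`. Within half a
period of a representative, the circle norm is the absolute value, so the function
`‖θ - s‖ ^ p - ‖θ‖ ^ p` reads `|θ - s₀| ^ p - |θ - 2π| ^ p` before the antipode `s₀ + π` of `s` and
`|θ - s₀ - 2π| ^ p - |θ - 2π| ^ p` after it. Both are increments `φ (y + δ) - φ y` of the convex
function `φ = |·| ^ p`, increasing in `y`, the second one with a sign flip. Hence the function rises
and then falls on `[π, 3π]`, its superlevel sets there are intervals, and their images are arcs.
-/

open Real Set

theorem ConvexOn.monotone_add_sub {φ : ℝ → ℝ} (hφ : ConvexOn ℝ univ φ) {δ : ℝ} (hδ : 0 ≤ δ) :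
    Monotone fun x => φ (x + δ) - φ x := by
  intro x y hxy
  rcases hδ.eq_or_lt with rfl | hδ
  · simp
  -- slope on `[x, x + δ]` ≤ slope on `[x, y + δ]` ≤ slope on `[y, y + δ]`
  have h₁ := hφ.secant_mono (mem_univ x) (mem_univ (x + δ)) (mem_univ (y + δ)) (by linarith)
    (by linarith) (by linarith)
  have h₂ := hφ.secant_mono (mem_univ (y + δ)) (mem_univ x) (mem_univ y) (by linarith)
    (by linarith) hxy
  have h₃ : (φ (y + δ) - φ x) / (y + δ - x) = (φ x - φ (y + δ)) / (x - (y + δ)) := by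
    rw [← neg_div_neg_eq]; ring_nf
  rw [add_sub_cancel_left] at h₁
  rw [show y - (y + δ) = -δ by ring, div_neg, ← neg_div, neg_sub] at h₂
  simpa using (div_le_div_iff_of_pos_right hδ).1 (h₁.trans (h₃ ▸ h₂))

theorem Set.ordConnected_Icc_inter_setOf_lt {α β : Type*} [LinearOrder α] [Preorder β]
    {F : α → β} {a m b : α} (hmono : MonotoneOn F (Icc a m)) (hanti : AntitoneOn F (Icc m b))
    (c : β) : OrdConnected (Icc a b ∩ {x | c < F x}) := by
  refine ⟨fun x ⟨hx, hFx⟩ z ⟨hz, hFz⟩ y ⟨hxy, hyz⟩ => ⟨⟨hx.1.trans hxy, hyz.trans hz.2⟩, ?_⟩⟩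
  rcases le_total y m with hym | hmy
  · exact hFx.trans_le (hmono ⟨hx.1, hxy.trans hym⟩ ⟨hx.1.trans hxy, hym⟩ hxy)
  · exact hFz.trans_le (hanti ⟨hmy, hyz.trans hz.2⟩ ⟨hmy.trans hyz, hz.2⟩ hyz)

theorem convexOn_abs_rpow {p : ℝ} (hp : 1 ≤ p) : ConvexOn ℝ univ fun x : ℝ => |x| ^ p := by
  have himage : (fun x : ℝ => |x|) '' univ = Ici 0 := by
    ext y; simpa using ⟨fun ⟨x, hx⟩ => hx ▸ abs_nonneg x, fun hy => ⟨y, abs_of_nonneg hy⟩⟩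
  have hpow : ConvexOn ℝ ((fun x : ℝ => |x|) '' univ) fun x => x ^ p := himage ▸ convexOn_rpow hp
  have hmono : MonotoneOn (fun x : ℝ => x ^ p) ((fun x : ℝ => |x|) '' univ) :=
    himage ▸ fun x hx y _ hxy => rpow_le_rpow hx hxy (by linarith)
  exact hpow.comp (convexOn_norm convex_univ) hmono

namespace AddCircle

variable {T : ℝ} [hT : Fact (0 < T)]

theorem norm_coe_of_abs_le_half {x : ℝ} (hx : |x| ≤ T / 2) : ‖(x : AddCircle T)‖ = |x| :=
  (norm_coe_eq_abs_iff T hT.out.ne').2 (by rwa [abs_of_pos hT.out])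

theorem norm_coe_eq_min {θ : ℝ} (hθ : θ ∈ Icc 0 T) : ‖(θ : AddCircle T)‖ = min θ (T - θ) := by
  obtain ⟨h₀, h₁⟩ := hθ
  rcases le_total θ (T / 2) with hθ | hθ
  · rw [norm_coe_of_abs_le_half (by rwa [abs_of_nonneg h₀]), abs_of_nonneg h₀,
      min_eq_left (by linarith)]
  · have hθT : ((θ - T : ℝ) : AddCircle T) = θ := by rw [coe_sub, coe_period, sub_zero]
    rw [← hθT, norm_coe_of_abs_le_half (by rw [abs_of_nonpos (by linarith)]; linarith),
      abs_of_nonpos (by linarith), min_eq_right (by linarith), neg_sub]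

theorem _root_.Function.Even.apply_norm_coe {φ : ℝ → ℝ} (hφ : φ.Even) {x : ℝ}
    (hx : |x| ≤ T / 2) : φ ‖(x : AddCircle T)‖ = φ x := by
  rw [norm_coe_of_abs_le_half hx]
  rcases abs_choice x with h | h <;> rw [h]
  exact hφ x

theorem isConnected_setOf_lt_apply_norm_sub_sub {φ : ℝ → ℝ} (hφ : ConvexOn ℝ univ φ)
    (heven : φ.Even) (s : AddCircle T) (β : ℝ)
    (hne : {θ : AddCircle T | β < φ ‖θ - s‖ - φ ‖θ‖}.Nonempty) :
    IsConnected {θ : AddCircle T | β < φ ‖θ - s‖ - φ ‖θ‖} := by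
  obtain ⟨σ, ⟨hσ₀, hσT⟩, rfl⟩ := (coe_image_Icc_eq T 0).ge (mem_univ s)
  rw [zero_add] at hσT
  set F : ℝ → ℝ := fun x => φ ‖(x : AddCircle T) - σ‖ - φ ‖(x : AddCircle T)‖
  have hnorm : ∀ x, |x - T| ≤ T / 2 → φ ‖(x : AddCircle T)‖ = φ (x - T) := fun x hx => by
    rw [← heven.apply_norm_coe hx, coe_sub, coe_period, sub_zero]
  have hnorm_sub : ∀ x, |x - σ| ≤ T / 2 → φ ‖(x : AddCircle T) - σ‖ = φ (x - σ) :=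
    fun x hx => by rw [← heven.apply_norm_coe hx, coe_sub]
  have hnorm_sub' : ∀ x, |x - (σ + T)| ≤ T / 2 →
      φ ‖(x : AddCircle T) - σ‖ = φ (x - (σ + T)) := fun x hx => by
    rw [← heven.apply_norm_coe hx, coe_sub, coe_add, coe_period, add_zero]
  have hmono : MonotoneOn F (Icc (T / 2) (σ + T / 2)) := by
    have hF : ∀ x ∈ Icc (T / 2) (σ + T / 2), F x = φ (x - T + (T - σ)) - φ (x - T) :=
      fun x ⟨h₁, h₂⟩ => by
        rw [show x - T + (T - σ) = x - σ by ring]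
        exact congr_arg₂ (· - ·) (hnorm_sub x (abs_le.2 ⟨by linarith, by linarith⟩))
          (hnorm x (abs_le.2 ⟨by linarith, by linarith⟩))
    intro x hx y hy hxy
    rw [hF x hx, hF y hy]
    exact hφ.monotone_add_sub (by linarith) (by linarith)
  have hanti : AntitoneOn F (Icc (σ + T / 2) (T / 2 + T)) := by
    have hF : ∀ x ∈ Icc (σ + T / 2) (T / 2 + T),
        F x = -(φ (x - (σ + T) + σ) - φ (x - (σ + T))) := fun x ⟨h₁, h₂⟩ => by
      rw [show x - (σ + T) + σ = x - T by ring, neg_sub]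
      exact congr_arg₂ (· - ·) (hnorm_sub' x (abs_le.2 ⟨by linarith, by linarith⟩))
        (hnorm x (abs_le.2 ⟨by linarith, by linarith⟩))
    intro x hx y hy hxy
    rw [hF x hx, hF y hy, neg_le_neg_iff]
    exact hφ.monotone_add_sub hσ₀ (by linarith)
  have himage : {θ : AddCircle T | β < φ ‖θ - σ‖ - φ ‖θ‖}
      = (↑) '' (Icc (T / 2) (T / 2 + T) ∩ {x | β < F x}) := by
    rw [show {x | β < F x} = ((↑) : ℝ → AddCircle T) ⁻¹' {θ | β < φ ‖θ - σ‖ - φ ‖θ‖} from rfl,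
      image_inter_preimage, coe_image_Icc_eq, univ_inter]
  rw [himage] at hne ⊢
  have hS := (ordConnected_Icc_inter_setOf_lt hmono hanti β).isPreconnected
  exact IsConnected.image ⟨hne.of_image, hS⟩ _ (AddCircle.continuous_mk' T).continuousOn

end AddCircle

/-- Monotone rearrangement of shifted antipodal potentials on a great circle.  Model the
great circle as `AddCircle (2π)`, whose norm is the intrinsic circle distance to `0`,
namely `min(|θ|, 2π − |θ|)` on representatives; let `f θ = −(1/p)‖θ‖^p` (the restriction
of `Φ_i − b_i`).  Then for every shift `s` and constant `β`, the set
`{θ | f θ − f (θ − s) > β}` is empty, all of the circle, or a single connected arc. -/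
theorem stmt17 (p : ℝ) (hp : 1 ≤ p) :
    (∀ θ : ℝ, θ ∈ Set.Icc (0 : ℝ) (2 * π) →
      ‖(θ : AddCircle (2 * π))‖ = min θ (2 * π - θ)) ∧
    (∀ (s : AddCircle (2 * π)) (β : ℝ),
      {θ : AddCircle (2 * π) |
          β < (-(1 / p) * ‖θ‖ ^ p) - (-(1 / p) * ‖θ - s‖ ^ p)} = ∅ ∨
      {θ : AddCircle (2 * π) |
          β < (-(1 / p) * ‖θ‖ ^ p) - (-(1 / p) * ‖θ - s‖ ^ p)} = Set.univ ∨
      IsConnected {θ : AddCircle (2 * π) |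
          β < (-(1 / p) * ‖θ‖ ^ p) - (-(1 / p) * ‖θ - s‖ ^ p)}) := by
  have : Fact (0 < 2 * π) := ⟨two_pi_pos⟩
  refine ⟨fun θ => AddCircle.norm_coe_eq_min, fun s β => ?_⟩
  set φ : ℝ → ℝ := fun x => 1 / p * |x| ^ p
  have hdiff : ∀ θ : AddCircle (2 * π),
      -(1 / p) * ‖θ‖ ^ p - -(1 / p) * ‖θ - s‖ ^ p = φ ‖θ - s‖ - φ ‖θ‖ := fun θ => by
    simp only [φ, abs_norm]
    ring
  simp only [hdiff]
  rcases eq_empty_or_nonempty {θ : AddCircle (2 * π) | β < φ ‖θ - s‖ - φ ‖θ‖} with h | h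
  · exact Or.inl h
  · refine Or.inr (Or.inr (AddCircle.isConnected_setOf_lt_apply_norm_sub_sub ?_ ?_ s β h))
    · exact (convexOn_abs_rpow hp).smul (by positivity)
    · exact fun x => by simp only [φ, abs_neg]
end
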